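/- If a mass-action system (G,k) is dynamically equivalent to some conservative mass-action system (G',k'), then the subnetwork of G' obtained by deleting all ghost vertices and their outgoing edges is conservative and dynamically equivalent to (G,k), and its source vertices are exactly the source vertices of G (those with nonzero net vector). -/
import Mathlib


open scoped BigOperators Classical
noncomputable section

/-- The monomial `x ^ y = ∏ i, x i ^ y i` (real exponents). -/
def monom {n : ℕ} (x y : Fin n → ℝ) : ℝ := ∏ i, x i ^ y i

/-- A reaction network: a finite directed graph with vertices in `ℝⁿ`,
edges indexed by `Fin m` via source and target maps. -/
structure RN (n : ℕ) where
  m : ℕ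
  src : Fin m → Fin n → ℝ
  tgt : Fin m → Fin n → ℝ

namespace RN

variable {n : ℕ} (G : RN n)

/-- The (finite) vertex set of the network. -/
def Vset : Finset (Fin n → ℝ) :=
  Finset.image G.src Finset.univ ∪ Finset.image G.tgt Finset.univ

lemma src_mem (e : Fin G.m) : G.src e ∈ G.Vset :=
  Finset.mem_union_left _ (Finset.mem_image_of_mem _ (Finset.mem_univ e))

/-- The vertices, as a type. -/
def Vert := {y : Fin n → ℝ // y ∈ G.Vset}

/-- Undirected adjacency between vertices. -/
def adjSub (a b : G.Vert) : Prop :=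
  ∃ e, (G.src e = a.1 ∧ G.tgt e = b.1) ∨ (G.src e = b.1 ∧ G.tgt e = a.1)

/-- The connected components of the underlying undirected graph. -/
def Components := Quot G.adjSub

/-- The number of connected components. -/
def numComp : ℕ := Nat.card G.Components

/-- The connected component of a vertex. -/
def compOf (v : G.Vert) : G.Components := Quot.mk _ v

/-- The stoichiometric subspace: the span of the reaction vectors. -/
def stoich : Submodule ℝ (Fin n → ℝ) :=
  Submodule.span ℝ (Set.range fun e => G.tgt e - G.src e)

/-- The deficiency `|V| - ℓ - dim S` (as an integer). -/
def deficiency : ℤ :=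
  (G.Vset.card : ℤ) - G.numComp - Module.finrank ℝ G.stoich

/-- `y` is a source vertex of `G`. -/
def IsSource (y : Fin n → ℝ) : Prop := ∃ e, G.src e = y

/-- The net reaction vector of `y` for the mass-action system `(G, k)`. -/
def netVec (k : Fin G.m → ℝ) (y : Fin n → ℝ) : Fin n → ℝ :=
  ∑ e, if G.src e = y then k e • (G.tgt e - G.src e) else 0

/-- The mass-action vector field generated by `(G, k)`. -/
def massAction (k : Fin G.m → ℝ) (x : Fin n → ℝ) : Fin n → ℝ :=
  ∑ e, (k e * monom x (G.src e)) • (G.tgt e - G.src e)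

/-- `G` is weakly reversible: for every edge there is a directed path back from its
target to its source, i.e. every edge lies on a directed cycle. -/
def WeaklyReversible : Prop :=
  ∀ e, Relation.ReflTransGen (fun a b => ∃ e', G.src e' = a ∧ G.tgt e' = b)
    (G.tgt e) (G.src e)

/-- The number of vertices of a connected component. -/
def compVertCount (c : G.Components) : ℕ := Nat.card {v : G.Vert // G.compOf v = c}

/-- The stoichiometric subspace of a connected component. -/
def compStoich (c : G.Components) : Submodule ℝ (Fin n → ℝ) :=
  Submodule.span ℝ
    {w | ∃ e, G.compOf ⟨G.src e, G.src_mem e⟩ = c ∧ w = G.tgt e - G.src e}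

/-- The deficiency `|V_L| - 1 - dim S_L` of a connected component (as an integer). -/
def compDef (c : G.Components) : ℤ :=
  (G.compVertCount c : ℤ) - 1 - Module.finrank ℝ (G.compStoich c)

end RN

open Finset

lemma monom_exp {n : ℕ} (t y : Fin n → ℝ) :
    monom (fun i => Real.exp (t i)) y = Real.exp (∑ i, t i * y i) := by
  rw [monom, Real.exp_sum]
  refine Finset.prod_congr rfl fun i _ => ?_
  rw [Real.rpow_def_of_pos (Real.exp_pos _), Real.log_exp]

def expHom {n : ℕ} (y : Fin n → ℝ) : Multiplicative (Fin n → ℝ) →* ℝ where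
  toFun t := Real.exp (∑ i, (t.toAdd) i * y i)
  map_one' := by simp
  map_mul' a b := by
    simp [← Real.exp_add, ← Finset.sum_add_distrib, add_mul]

lemma expHom_inj {n : ℕ} : Function.Injective (@expHom n) := by
  intro y y' h
  funext i
  have h2 := congrArg (fun f : Multiplicative (Fin n → ℝ) →* ℝ =>
    f (Multiplicative.ofAdd (fun j => if j = i then (1:ℝ) else 0))) h
  simp only [expHom, MonoidHom.coe_mk, OneHom.coe_mk, toAdd_ofAdd] at h2
  have hs : ∀ z : Fin n → ℝ, ∑ j, (if j = i then (1:ℝ) else 0) * z j = z i := by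
    intro z
    rw [Finset.sum_eq_single i]
    · simp
    · intro j _ hj; simp [hj]
    · simp
  rw [hs, hs] at h2
  exact Real.exp_injective h2

lemma key {n : ℕ} (S : Finset (Fin n → ℝ)) (c : (Fin n → ℝ) → ℝ)
    (h : ∀ x : Fin n → ℝ, (∀ i, 0 < x i) → ∑ y ∈ S, c y * monom x y = 0) :
    ∀ y ∈ S, c y = 0 := by
  have hLI : LinearIndependent ℝ
      (fun y : {y // y ∈ S} => ((expHom y.1 : Multiplicative (Fin n → ℝ) → ℝ))) :=
    (linearIndependent_monoidHom (Multiplicative (Fin n → ℝ)) ℝ).comp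
      (fun y : {y // y ∈ S} => expHom y.1)
      (fun a b hab => Subtype.ext (expHom_inj hab))
  have hz : ∑ y : {y // y ∈ S}, c y.1 • ((expHom y.1 : Multiplicative (Fin n → ℝ) → ℝ)) = 0 := by
    funext t
    have hx : ∀ i, 0 < Real.exp ((t.toAdd) i) := fun i => Real.exp_pos _
    have := h (fun i => Real.exp ((t.toAdd) i)) hx
    simp only [monom_exp] at this
    rw [← Finset.sum_attach S (fun y => c y * Real.exp (∑ i, (t.toAdd) i * y i))] at this
    simpa [Finset.sum_apply, expHom, smul_eq_mul] using this
  have := Fintype.linearIndependent_iff.mp hLI (fun y => c y.1) hz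
  intro y hy
  exact this ⟨y, hy⟩

lemma keyVec {n : ℕ} (S : Finset (Fin n → ℝ)) (c : (Fin n → ℝ) → (Fin n → ℝ))
    (h : ∀ x : Fin n → ℝ, (∀ i, 0 < x i) → ∑ y ∈ S, monom x y • c y = 0) :
    ∀ y ∈ S, c y = 0 := by
  intro y hy
  funext j
  refine key S (fun y => c y j) (fun x hx => ?_) y hy
  have := congrFun (h x hx) j
  simpa [Finset.sum_apply, mul_comm] using this
open RN

lemma massAction_group {n : ℕ} (G : RN n) (k : Fin G.m → ℝ) (x : Fin n → ℝ)
    (Q : (Fin n → ℝ) → Prop) [DecidablePred Q] :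
    ∑ e ∈ Finset.univ.filter (fun e => Q (G.src e)),
        (k e * monom x (G.src e)) • (G.tgt e - G.src e)
      = ∑ y ∈ (Finset.univ.image G.src).filter Q, monom x y • G.netVec k y := by
  classical
  rw [Finset.sum_filter]
  have : ∀ y, monom x y • G.netVec k y
      = ∑ e, if G.src e = y then (k e * monom x y) • (G.tgt e - G.src e) else 0 := by
    intro y
    rw [RN.netVec, Finset.smul_sum]
    refine Finset.sum_congr rfl fun e _ => ?_
    split <;> simp [smul_smul, mul_comm]
  simp_rw [this]
  rw [Finset.sum_comm]
  refine Finset.sum_congr rfl fun e _ => ?_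
  rw [Finset.sum_ite_eq (((Finset.univ.image G.src).filter Q)) (G.src e)
    (fun y => (k e * monom x y) • (G.tgt e - G.src e))]
  by_cases hQ : Q (G.src e) <;>
    simp [hQ, Finset.mem_filter, Finset.mem_image]

lemma netVec_zero {n : ℕ} (G : RN n) (k : Fin G.m → ℝ) (y : Fin n → ℝ)
    (h : y ∉ Finset.univ.image G.src) : G.netVec k y = 0 := by
  classical
  rw [RN.netVec]
  refine Finset.sum_eq_zero fun e _ => ?_
  have : G.src e ≠ y := fun he => h (Finset.mem_image.mpr ⟨e, Finset.mem_univ _, he⟩)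
  simp [this]

lemma massAction_eq_sum {n : ℕ} (G : RN n) (k : Fin G.m → ℝ) (x : Fin n → ℝ)
    (S : Finset (Fin n → ℝ)) (hS : Finset.univ.image G.src ⊆ S) :
    G.massAction k x = ∑ y ∈ S, monom x y • G.netVec k y := by
  classical
  have h1 := massAction_group G k x (fun _ => True)
  simp only [Finset.filter_true] at h1
  rw [RN.massAction, h1]
  refine Finset.sum_subset hS fun y _ hy => ?_
  rw [netVec_zero G k y hy, smul_zero]

lemma netVec_eq {n : ℕ} (G G' : RN n)
    (k : Fin G.m → ℝ) (k' : Fin G'.m → ℝ)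
    (hequiv : ∀ x : Fin n → ℝ, (∀ i, 0 < x i) →
      G.massAction k x = G'.massAction k' x) :
    ∀ y, G.netVec k y = G'.netVec k' y := by
  classical
  set S := Finset.univ.image G.src ∪ Finset.univ.image G'.src with hSdef
  have hkey : ∀ y ∈ S, (fun y => G.netVec k y - G'.netVec k' y) y = 0 := by
    refine keyVec S _ (fun x hx => ?_)
    have h1 := massAction_eq_sum G k x S Finset.subset_union_left
    have h2 := massAction_eq_sum G' k' x S Finset.subset_union_right
    simp only [smul_sub, Finset.sum_sub_distrib, ← h1, ← h2, hequiv x hx, sub_self]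
  intro y
  by_cases hy : y ∈ S
  · have := hkey y hy; simpa [sub_eq_zero] using this
  · rw [netVec_zero G k y (fun h => hy (Finset.mem_union_left _ h)),
      netVec_zero G' k' y (fun h => hy (Finset.mem_union_right _ h))]

lemma source_of_netVec_ne {n : ℕ} (G : RN n) (k : Fin G.m → ℝ) (y : Fin n → ℝ)
    (h : G.netVec k y ≠ 0) : ∃ e, G.src e = y := by
  by_contra hc
  exact h (netVec_zero G k y (fun hm => hc (by
    obtain ⟨e, _, he⟩ := Finset.mem_image.mp hm; exact ⟨e, he⟩)))



/-- If a mass-action system `(G, k)` is dynamically equivalent to a conservative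
mass-action system `(G', k')`, then the subnetwork of `G'` obtained by deleting all
ghost vertices together with their outgoing edges is conservative and dynamically
equivalent to `(G, k)`, and its source vertices are exactly the source vertices of `G`
with nonzero net vector. -/
theorem conservative_realization_source_only {n : ℕ} (G G' : RN n)
    (k : Fin G.m → ℝ) (k' : Fin G'.m → ℝ)
    (hk : ∀ e, 0 < k e) (hk' : ∀ e, 0 < k' e)
    (hequiv : ∀ x : Fin n → ℝ, (∀ i, 0 < x i) →
      G.massAction k x = G'.massAction k' x)
    (hcons : ∃ v : Fin n → ℝ, (∀ i, 0 < v i) ∧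
      ∀ x ∈ G'.stoich, ∑ i, v i * x i = 0) :
    -- the subnetwork on the edges whose source is not a ghost vertex is conservative,
    (∃ v : Fin n → ℝ, (∀ i, 0 < v i) ∧
      ∀ x ∈ Submodule.span ℝ
        {w | ∃ e : Fin G'.m, G'.netVec k' (G'.src e) ≠ 0 ∧ w = G'.tgt e - G'.src e},
        ∑ i, v i * x i = 0) ∧
    -- it is dynamically equivalent to `(G, k)`,
    (∀ x : Fin n → ℝ, (∀ i, 0 < x i) →
      (∑ e : {e : Fin G'.m // G'.netVec k' (G'.src e) ≠ 0},
          (k' e.1 * monom x (G'.src e.1)) • (G'.tgt e.1 - G'.src e.1)) =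
        G.massAction k x) ∧
    -- and its source vertices are exactly the non-ghost source vertices of `G`.
    ({y : Fin n → ℝ | ∃ e : Fin G'.m, G'.netVec k' (G'.src e) ≠ 0 ∧ G'.src e = y} =
      {y : Fin n → ℝ | G.IsSource y ∧ G.netVec k y ≠ 0}) := by
  classical
  have hnet := netVec_eq G G' k k' hequiv
  refine ⟨?_, ?_, ?_⟩
  · obtain ⟨v, hv, hv0⟩ := hcons
    refine ⟨v, hv, fun x hx => hv0 x ?_⟩
    refine Submodule.span_le.mpr ?_ hx
    rintro w ⟨e, -, rfl⟩
    exact Submodule.subset_span ⟨e, rfl⟩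
  · intro x hx
    set Q : (Fin n → ℝ) → Prop := fun y => G'.netVec k' y ≠ 0 with hQ
    have h1 : (∑ e : {e : Fin G'.m // G'.netVec k' (G'.src e) ≠ 0},
          (k' e.1 * monom x (G'.src e.1)) • (G'.tgt e.1 - G'.src e.1))
        = ∑ e ∈ Finset.univ.filter (fun e => Q (G'.src e)),
            (k' e * monom x (G'.src e)) • (G'.tgt e - G'.src e) := by
      rw [← Finset.subtype_univ]
      exact Finset.sum_subtype_eq_sum_filter
        (fun e => (k' e * monom x (G'.src e)) • (G'.tgt e - G'.src e))
    rw [h1]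
    refine (massAction_group G' k' x Q).trans ?_
    have h2 : ∀ y ∈ (Finset.univ.image G'.src), monom x y • G'.netVec k' y ≠ 0 → Q y := by
      intro y _ hy h0
      exact hy (by rw [h0, smul_zero])
    refine (Finset.sum_filter_of_ne h2).trans ?_
    exact (massAction_eq_sum G' k' x _ (le_refl _)).symm.trans (hequiv x hx).symm
  · ext y
    simp only [Set.mem_setOf_eq]
    constructor
    · rintro ⟨e, hne, rfl⟩
      have hny : G.netVec k (G'.src e) ≠ 0 := by rw [hnet]; exact hne
      exact ⟨source_of_netVec_ne G k _ hny, hny⟩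
    · rintro ⟨-, hny⟩
      have hny' : G'.netVec k' y ≠ 0 := by rw [← hnet]; exact hny
      obtain ⟨e, he⟩ := source_of_netVec_ne G' k' y hny'
      exact ⟨e, by rw [he]; exact hny', he⟩
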